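/- Let q ≥ 2 and n ≥ q - 1, and let a_1, ..., a_n be residues mod q with gcd(a_i, q) = 1 for all i. Then for every ρ ∈ Z/qZ, the number of subsets I ⊆ [n] with ∑_{i∈I} a_i ≡ ρ (mod q) is at least C(n, ⌈(n-q)/2⌉)_q. -/

import Mathlib

/-- The mod-q binomial coefficient `C(n,s)_q = ∑_{0 ≤ j ≤ n, j ≡ s (mod q)} C(n,j)`. -/
def modBinom (n q : ℕ) (s : ℤ) : ℕ :=
  ∑ j ∈ Finset.range (n + 1), if ((j : ℤ) - s) % (q : ℤ) = 0 then n.choose j else 0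

/-- The sum of the `k` middle mod-`q` binomial coefficients,
`_{(n-k)/2 ≤ j < (n+k)/2} C(n,j)_q` (the integers `j` in question all lie in `[-q, n+q]`
when `k ≤ q`). -/
noncomputable def middleSum (n q k : ℕ) : ℕ :=
  ∑ j ∈ Finset.Icc (-(q : ℤ)) ((n : ℤ) + q),
    if (n : ℤ) - k ≤ 2 * j ∧ 2 * j < (n : ℤ) + k then modBinom n q j else 0

/-!
Write `N(S)` for the number of subsets of the `a_i` with sum in `S ⊆ ℤ/q`. Adjoining one more
unit `u` turns `N(S)` into `N(S) + N(S - u) = N(S ∪ (S - u)) + N(S ∩ (S - u))`. As `u` generates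
`ℤ/q`, `S - u ≠ S` unless `S` is empty or everything, and then `|S ∩ (S - u)| < |S|` while the
two sizes add up to `2|S|`. So induction on the number of units gives `N(S) ≥ B(n, |S|)` for any
`B` that is convex in `k ∈ [0, q]` and satisfies `B(n+1, k) = B(n, k-1) + B(n, k+1)`,
`B(n, 0) = 0`, `B(n, q) = 2^n`; the recursion itself passes convexity from `n` to `n + 1`.
By Pascal's rule the sum of `k` consecutive `C(n, ·)_q` around `⌈(n-q)/2⌉`, the residue
opposite to `n/2`, is such a `B`, and for `k = 1` it is `C(n, ⌈(n-q)/2⌉)_q`.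
-/

open Finset
open scoped Pointwise

theorem modBinom_succ (n q : ℕ) (s : ℤ) :
    modBinom (n + 1) q s = modBinom n q s + modBinom n q (s - 1) := by
  have := sum_choose_succ_mul (R := ℕ) (fun j _ => if ((j : ℤ) - s) % q = 0 then 1 else 0) n
  simp only [mul_boole, Nat.cast_id] at this
  rw [modBinom, this]
  congr 1
  refine sum_congr rfl fun j _ => ?_
  push_cast
  ring_nf

theorem card_filter_range_emod_sub_eq_zero {q : ℕ} (hq : 0 < q) (c : ℤ) :
    #{r ∈ range q | (c - ((r : ℕ) : ℤ)) % q = 0} = 1 := by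
  rw [card_eq_one]
  refine ⟨(c % q).toNat, ext fun r => ?_⟩
  have h0 := Int.emod_nonneg c (by omega : (q : ℤ) ≠ 0)
  have h1 := Int.emod_lt_of_pos c (by omega : (0 : ℤ) < q)
  simp only [mem_filter, mem_range, mem_singleton, ← Int.emod_eq_emod_iff_emod_sub_eq_zero]
  constructor
  · rintro ⟨hr, h⟩
    rw [h, Int.emod_eq_of_lt (by omega) (by omega)]
    omega
  · rintro rfl
    refine ⟨by omega, ?_⟩
    rw [Int.toNat_of_nonneg h0, Int.emod_emod_of_dvd _ dvd_rfl]

def modBinomWindow (n q k : ℕ) (h : ℤ) : ℕ :=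
  ∑ r ∈ range k, modBinom n q (h + r)

theorem modBinomWindow_succ_succ (n q k : ℕ) (h : ℤ) :
    modBinomWindow (n + 1) q (k + 1) h =
      modBinomWindow n q k h + modBinomWindow n q (k + 2) (h - 1) := by
  have shift (m : ℕ) :
      modBinomWindow n q (m + 1) (h - 1) = modBinom n q (h - 1) + modBinomWindow n q m h := by
    simp only [modBinomWindow, sum_range_succ', add_comm _ (modBinom n q _)]
    push_cast
    ring_nf
  calc modBinomWindow (n + 1) q (k + 1) h
      = modBinomWindow n q (k + 1) h + modBinomWindow n q (k + 1) (h - 1) := by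
        simp only [modBinomWindow, modBinom_succ, sum_add_distrib]
        congr 2 with r
        ring_nf
    _ = _ := by
        rw [shift, shift (k + 1), modBinomWindow, modBinomWindow, sum_range_succ]
        ring

theorem modBinomWindow_self (n : ℕ) {q : ℕ} (hq : 0 < q) (h : ℤ) :
    modBinomWindow n q q h = 2 ^ n := by
  simp only [modBinomWindow, modBinom]
  rw [sum_comm, ← Nat.sum_range_choose]
  refine sum_congr rfl fun j _ => ?_
  simp only [← sum_filter, sum_const, smul_eq_mul, ← sub_sub,
    card_filter_range_emod_sub_eq_zero hq, one_mul]

-- The window around `⌈(n-q)/2⌉`, growing alternately to the right and to the left with `k`.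
def griggsBound (q n k : ℕ) : ℕ :=
  modBinomWindow n q k (((n : ℤ) - k + 2 - q) / 2)

section griggsBound

variable {q : ℕ}

theorem griggsBound_zero_right (n : ℕ) : griggsBound q n 0 = 0 := rfl

theorem griggsBound_self (hq : 0 < q) (n : ℕ) : griggsBound q n q = 2 ^ n :=
  modBinomWindow_self n hq _

theorem griggsBound_succ_self (hq : 0 < q) (n : ℕ) :
    griggsBound q (n + 1) q = 2 * griggsBound q n q := by
  rw [griggsBound_self hq, griggsBound_self hq, pow_succ']

theorem griggsBound_succ_succ (n k : ℕ) :
    griggsBound q (n + 1) (k + 1) = griggsBound q n k + griggsBound q n (k + 2) := by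
  rw [griggsBound, modBinomWindow_succ_succ, griggsBound, griggsBound]
  congr 2 <;> push_cast <;> omega

theorem griggsBound_zero_left {k : ℕ} (hk : k < q) : griggsBound q 0 k = 0 := by
  -- the window lies strictly between `-q` and `0`, so it contains no multiple of `q`
  rw [griggsBound, modBinomWindow]
  refine sum_eq_zero fun r hr => ?_
  have hr := mem_range.1 hr
  rw [modBinom, sum_range_one, if_neg]
  rw [Int.emod_eq_of_lt (by omega) (by omega)]
  omega

theorem griggsBound_succ_add_le (hq : 0 < q) (n : ℕ) {a b : ℕ} (hab : a ≤ b)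
    (hb : b + 1 ≤ q) :
    griggsBound q n (a + 1) + griggsBound q n b ≤
      griggsBound q n a + griggsBound q n (b + 1) := by
  induction n generalizing a b with
  | zero =>
    obtain rfl | hab := hab.eq_or_lt
    · omega
    rw [griggsBound_zero_left (by omega : a + 1 < q), griggsBound_zero_left (by omega : b < q)]
    omega
  | succ n ih =>
    obtain rfl | hab := hab.eq_or_lt
    · omega
    obtain ⟨c, rfl⟩ : ∃ c, b = c + 1 := ⟨b - 1, by omega⟩
    have lower : griggsBound q n a + griggsBound q n c + griggsBound q n (a + 1) ≤
        griggsBound q (n + 1) a + griggsBound q n (c + 1) := by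
      rcases a with _ | a
      · have := ih (Nat.zero_le c) (by omega)
        rw [griggsBound_zero_right] at this ⊢
        omega
      · rw [griggsBound_succ_succ]
        have := ih (by omega : a ≤ c) (by omega)
        simp only [add_assoc, Nat.reduceAdd] at this ⊢
        omega
    have upper : griggsBound q n (a + 2) + griggsBound q n (c + 2) + griggsBound q n (c + 1) ≤
        griggsBound q n (a + 1) + griggsBound q (n + 1) (c + 2) := by
      obtain hc | hc := (by omega : c + 2 = q ∨ c + 2 < q)
      · rw [hc, griggsBound_succ_self hq]
        have := ih (by omega : a + 1 ≤ c + 1) (by omega)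
        simp only [add_assoc, Nat.reduceAdd, hc] at this ⊢
        omega
      · rw [griggsBound_succ_succ]
        have := ih (by omega : a + 1 ≤ c + 2) (by omega)
        simp only [add_assoc, Nat.reduceAdd] at this ⊢
        omega
    rw [griggsBound_succ_succ, griggsBound_succ_succ]
    simp only [add_assoc, Nat.reduceAdd] at lower upper ⊢
    omega

theorem griggsBound_add_add_le (hq : 0 < q) (n e : ℕ) {a b : ℕ} (hab : a ≤ b)
    (hb : b + e ≤ q) :
    griggsBound q n (a + e) + griggsBound q n b ≤
      griggsBound q n a + griggsBound q n (b + e) := by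
  induction e generalizing a b with
  | zero => simp only [add_zero, le_refl]
  | succ e ih =>
    have step := griggsBound_succ_add_le hq n hab (by omega)
    have shifted := ih (by omega : a + 1 ≤ b + 1) (by omega)
    rw [add_right_comm a, add_right_comm b] at shifted
    rw [← add_assoc, ← add_assoc]
    omega

theorem griggsBound_succ_le_add (hq : 0 < q) (n : ℕ) {j k l : ℕ} (hjk : j < k)
    (hjl : j + l = 2 * k) (hl : l ≤ q) :
    griggsBound q (n + 1) k ≤ griggsBound q n j + griggsBound q n l := by
  obtain ⟨c, rfl⟩ : ∃ c, k = c + 1 := ⟨k - 1, by omega⟩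
  have := griggsBound_add_add_le hq n (c - j) (by omega : j ≤ c + 2) (by omega)
  rw [Nat.add_sub_cancel' (by omega), (by omega : c + 2 + (c - j) = l)] at this
  rw [griggsBound_succ_succ]
  omega

end griggsBound

section subsetSumCount

variable {ι G : Type*} [AddCommGroup G] [DecidableEq G]

def subsetSumCount (a : ι → G) (s : Finset ι) (S : Finset G) : ℕ :=
  #{I ∈ s.powerset | ∑ i ∈ I, a i ∈ S}

variable (a : ι → G)

theorem subsetSumCount_empty (S : Finset G) :
    subsetSumCount a ∅ S = if 0 ∈ S then 1 else 0 := by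
  rw [subsetSumCount, powerset_empty, filter_singleton, sum_empty]
  split_ifs <;> rfl

theorem subsetSumCount_insert [DecidableEq ι] {i : ι} {s : Finset ι} (hi : i ∉ s)
    (S : Finset G) :
    subsetSumCount a (insert i s) S = subsetSumCount a s S + subsetSumCount a s (-a i +ᵥ S) := by
  simp only [subsetSumCount, card_filter, sum_powerset_insert hi, mem_neg_vadd_finset_iff,
    vadd_eq_add]
  congr 1
  refine sum_congr rfl fun I hI => ?_
  rw [sum_insert fun h => hi (mem_powerset.1 hI h)]

theorem subsetSumCount_union_add_inter [DecidableEq ι] (s : Finset ι) (S T : Finset G) :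
    subsetSumCount a s (S ∪ T) + subsetSumCount a s (S ∩ T) =
      subsetSumCount a s S + subsetSumCount a s T := by
  simp only [subsetSumCount, mem_union, mem_inter]
  rw [filter_or, filter_and]
  exact card_union_add_card_inter _ _

end subsetSumCount

theorem ZMod.eq_univ_of_vadd_finset_eq {q : ℕ} [NeZero q] {u : ZMod q} (hu : IsUnit u)
    {S : Finset (ZMod q)} (hS : S.Nonempty) (h : u +ᵥ S = S) : S = univ := by
  have hstab (v : ZMod q) : v ∈ AddAction.stabilizer (ZMod q) S := by
    have hv : (v * ↑hu.unit⁻¹).val • u = v := by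
      rw [nsmul_eq_mul, ZMod.natCast_zmod_val, mul_assoc, IsUnit.val_inv_mul, mul_one]
    exact hv ▸ AddSubgroup.nsmul_mem _ (AddAction.mem_stabilizer_iff.2 h) _
  obtain ⟨x, hx⟩ := hS
  refine eq_univ_of_forall fun y => ?_
  have hyx := hstab (y - x)
  simpa using (AddAction.mem_stabilizer_finset.1 hyx x).2 hx

theorem griggsBound_le_subsetSumCount {q : ℕ} [NeZero q] {ι : Type*} [DecidableEq ι]
    {a : ι → ZMod q} (s : Finset ι) (ha : ∀ i ∈ s, IsUnit (a i)) (S : Finset (ZMod q)) :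
    griggsBound q #s #S ≤ subsetSumCount a s S := by
  have hq : 0 < q := NeZero.pos q
  have hSq (T : Finset (ZMod q)) : #T ≤ q := (card_le_univ T).trans_eq (ZMod.card q)
  induction s using Finset.induction_on generalizing S with
  | empty =>
    rw [subsetSumCount_empty, card_empty]
    obtain hS | hS := (hSq S).lt_or_eq
    · rw [griggsBound_zero_left hS]
      exact Nat.zero_le _
    · rw [eq_univ_of_card S (hS.trans (ZMod.card q).symm), card_univ, ZMod.card,
        griggsBound_self hq, if_pos (mem_univ _), pow_zero]
  | insert i t hi ih =>
    have hat : ∀ j ∈ t, IsUnit (a j) := fun j hj => ha j (mem_insert_of_mem hj)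
    rw [subsetSumCount_insert a hi, card_insert_of_notMem hi]
    obtain rfl | hS := S.eq_empty_or_nonempty
    · exact Nat.zero_le _
    set S' := -a i +ᵥ S
    by_cases hS' : S' = S
    · have hU := ZMod.eq_univ_of_vadd_finset_eq (ha i (mem_insert_self i t)).neg hS hS'
      have := ih hat univ
      rw [card_univ, ZMod.card] at this
      rw [hS', hU, card_univ, ZMod.card, griggsBound_succ_self hq]
      omega
    · have hcard : #S' = #S := card_vadd_finset _ _
      have hinter : #(S ∩ S') < #S := by
        refine (card_le_card inter_subset_left).lt_of_ne fun h => hS' ?_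
        have hSS' := inter_eq_left.1 (eq_of_subset_of_card_le inter_subset_left h.ge)
        exact (eq_of_subset_of_card_le hSS' hcard.le).symm
      have hsplit := card_union_add_card_inter S S'
      calc griggsBound q (#t + 1) #S
          ≤ griggsBound q #t #(S ∩ S') + griggsBound q #t #(S ∪ S') :=
            griggsBound_succ_le_add hq _ hinter (by omega) (hSq _)
        _ ≤ subsetSumCount a t (S ∩ S') + subsetSumCount a t (S ∪ S') :=
            add_le_add (ih hat _) (ih hat _)
        _ = _ := by rw [add_comm, subsetSumCount_union_add_inter]

theorem griggs_lower_bound (q n : ℕ) (hq : 2 ≤ q) (hn : q - 1 ≤ n)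
    (a : Fin n → ZMod q) (ha : ∀ i, IsUnit (a i)) (ρ : ZMod q) :
    modBinom n q ((n - q + 1) / 2 : ℕ) ≤
      ((Finset.univ : Finset (Finset (Fin n))).filter
          (fun I => (∑ i ∈ I, a i) = ρ)).card := by
  have : NeZero q := ⟨by omega⟩
  have hbound := griggsBound_le_subsetSumCount univ (fun i _ => ha i) {ρ}
  have hcentre : griggsBound q n 1 = modBinom n q ((n - q + 1) / 2 : ℕ) := by
    rw [griggsBound, modBinomWindow, sum_range_one]
    congr 1
    omega
  simpa only [card_univ, Fintype.card_fin, card_singleton, hcentre, subsetSumCount, powerset_univ,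
    mem_singleton] using hbound
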